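/- Let Qₙ be the n×n matrix with entries 1 on and above the diagonal and 0 below. Then ‖Qₙ‖ = 1/(2 sin(π/(4n+2))). -/

import Mathlib

/-!
`Q` inverts the difference operator `(D z)ₖ = zₖ - zₖ₊₁` on sequences with `zₙ = 0`, so `‖Q‖⁻¹`
is the best constant `s` in the discrete Wirtinger inequality `s² ∑ |zₖ|² ≤ ∑ |zₖ - zₖ₊₁|²`.
With `θ = π / (4n + 2)`, the sequence `uₖ = cos ((2k + 1) θ)` is positive for `k < n`, vanishes
at `k = n` and solves `uₖ₊₁ + uₖ₋₁ = 2 cos (2θ) uₖ` with `u₋₁ = u₀`. Completing the square in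
each term with the ratio `uₖ₊₁ / uₖ` proves the inequality with `s² = 2 - 2 cos (2θ) = 4 sin² θ`,
and `z = u` attains equality.
-/

open Real

noncomputable def opN {n : ℕ} (A : Matrix (Fin n) (Fin n) ℂ) : ℝ :=
  ‖Matrix.toEuclideanCLM (𝕜 := ℂ) A‖

open Finset

noncomputable def cosSeq (θ : ℝ) (k : ℕ) : ℝ := cos ((2 * k + 1) * θ)

lemma cosSeq_add_two (θ : ℝ) (k : ℕ) :
    cosSeq θ (k + 2) + cosSeq θ k = 2 * cos (2 * θ) * cosSeq θ (k + 1) := by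
  simp only [cosSeq, cos_add_cos]
  push_cast
  ring_nf

lemma cosSeq_one_add_zero (θ : ℝ) : cosSeq θ 1 + cosSeq θ 0 = 2 * cos (2 * θ) * cosSeq θ 0 := by
  simp only [cosSeq, cos_add_cos]
  push_cast
  ring_nf

lemma cosSeq_pos {n k : ℕ} (hk : k < n) : 0 < cosSeq (π / (4 * n + 2)) k := by
  apply cos_pos_of_mem_Ioo
  have hk' : (k : ℝ) + 1 ≤ n := by exact_mod_cast hk
  constructor
  · have : 0 < (2 * (k : ℝ) + 1) * (π / (4 * n + 2)) := by positivity
    linarith [pi_pos]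
  · rw [mul_div_assoc', div_lt_iff₀ (by positivity)]
    nlinarith [pi_pos]

lemma cosSeq_self (n : ℕ) : cosSeq (π / (4 * n + 2)) n = 0 := by
  rw [cosSeq, ← cos_pi_div_two]
  congr 1
  field_simp
  ring

section GroundState

variable {E : Type*} [SeminormedAddCommGroup E]

lemma weighted_norm_sq_le_norm_sub_sq (a b : E) {β : ℝ} (hβ : 0 < β) :
    (1 - β) * ‖a‖ ^ 2 + (1 - β⁻¹) * ‖b‖ ^ 2 ≤ ‖a - b‖ ^ 2 := by
  have hsq : (‖a‖ - ‖b‖) ^ 2 ≤ ‖a - b‖ ^ 2 := by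
    rw [← sq_abs]
    exact pow_le_pow_left₀ (abs_nonneg _) (abs_norm_sub_norm_le a b) 2
  have hsplit : (1 - β) * ‖a‖ ^ 2 + (1 - β⁻¹) * ‖b‖ ^ 2
      = (‖a‖ - ‖b‖) ^ 2 - (β * ‖a‖ - ‖b‖) ^ 2 / β := by
    field_simp
    ring
  have : 0 ≤ (β * ‖a‖ - ‖b‖) ^ 2 / β := by positivity
  linarith

/- In the hypotheses `hrec` and `h0` below, `h0` is the recurrence at `k = 0` under the
boundary convention `u (-1) = u 0`. -/
variable {u : ℕ → ℝ} {c : ℝ}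

lemma le_sum_norm_sub_sq_sub (hrec : ∀ k, u (k + 2) + u k = c * u (k + 1))
    (h0 : u 1 + u 0 = c * u 0) (z : ℕ → E) {m : ℕ} (hpos : ∀ k ≤ m, 0 < u k) :
    (1 - c + u (m + 1) / u m) * ‖z m‖ ^ 2
      ≤ ∑ k ∈ range m, (‖z k - z (k + 1)‖ ^ 2 - (2 - c) * ‖z k‖ ^ 2) := by
  induction m with
  | zero =>
    have hu0 : u 0 ≠ 0 := (hpos 0 le_rfl).ne'
    have : 1 - c + u 1 / u 0 = 0 := by
      field_simp
      linarith
    simp [this]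
  | succ m ih =>
    have hm := hpos m (by omega)
    have hm1 := hpos (m + 1) le_rfl
    have ih := ih fun k hk => hpos k (by omega)
    have hstep := weighted_norm_sq_le_norm_sub_sq (z m) (z (m + 1)) (div_pos hm1 hm)
    have hcoef : 1 - c + u (m + 2) / u (m + 1) = 1 - (u (m + 1) / u m)⁻¹ := by
      rw [inv_div]
      field_simp
      linarith [hrec m]
    rw [sum_range_succ, hcoef]
    linarith

theorem mul_sum_norm_sq_le_sum_norm_sub_sq (hrec : ∀ k, u (k + 2) + u k = c * u (k + 1))
    (h0 : u 1 + u 0 = c * u 0) {n : ℕ} (hpos : ∀ k < n, 0 < u k) (hu : u n = 0)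
    (z : ℕ → E) (hz : z n = 0) :
    (2 - c) * ∑ k ∈ range n, ‖z k‖ ^ 2 ≤ ∑ k ∈ range n, ‖z k - z (k + 1)‖ ^ 2 := by
  suffices 0 ≤ ∑ k ∈ range n, (‖z k - z (k + 1)‖ ^ 2 - (2 - c) * ‖z k‖ ^ 2) by
    rwa [sum_sub_distrib, ← mul_sum, sub_nonneg] at this
  cases n with
  | zero => simp
  | succ m =>
    have h := le_sum_norm_sub_sq_sub hrec h0 z (m := m) fun k hk => hpos k (by omega)
    rw [hu, zero_div, add_zero] at h
    rw [sum_range_succ, hz, sub_zero]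
    linarith

lemma sum_sub_sq_sub_eq (hrec : ∀ k, u (k + 2) + u k = c * u (k + 1))
    (h0 : u 1 + u 0 = c * u 0) (m : ℕ) :
    ∑ k ∈ range m, ((u k - u (k + 1)) ^ 2 - (2 - c) * u k ^ 2)
      = u m * u (m + 1) - (c - 1) * u m ^ 2 := by
  induction m with
  | zero =>
    rw [sum_range_zero]
    linear_combination (-u 0) * h0
  | succ m ih =>
    rw [sum_range_succ, ih]
    linear_combination (-u (m + 1)) * hrec m

theorem sum_sub_sq_eq (hrec : ∀ k, u (k + 2) + u k = c * u (k + 1))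
    (h0 : u 1 + u 0 = c * u 0) {n : ℕ} (hu : u n = 0) :
    ∑ k ∈ range n, (u k - u (k + 1)) ^ 2 = (2 - c) * ∑ k ∈ range n, u k ^ 2 := by
  have h := sum_sub_sq_sub_eq hrec h0 n
  rw [hu, sum_sub_distrib, ← mul_sum] at h
  linarith

end GroundState

lemma ContinuousLinearMap.opNorm_eq_inv_of_bounds {𝕜 E : Type*} [NontriviallyNormedField 𝕜]
    [NormedAddCommGroup E] [NormedSpace 𝕜 E] (T : E →L[𝕜] E) {s : ℝ} (hs : 0 < s)
    (hle : ∀ x, s * ‖T x‖ ≤ ‖x‖) (heq : ∃ x, T x ≠ 0 ∧ ‖x‖ = s * ‖T x‖) : ‖T‖ = s⁻¹ := by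
  apply le_antisymm
  · refine T.opNorm_le_bound (by positivity) fun x => ?_
    rw [← div_eq_inv_mul, le_div_iff₀' hs]
    exact hle x
  · obtain ⟨x, hx, hnorm⟩ := heq
    have hTx : 0 < ‖T x‖ := norm_pos_iff.mpr hx
    calc s⁻¹ = ‖T x‖ / ‖x‖ := by rw [hnorm]; field_simp
      _ ≤ ‖T‖ := T.ratio_le_opNorm x

def upperOnes (n : ℕ) : Matrix (Fin n) (Fin n) ℂ := Matrix.of fun k ℓ => if k ≤ ℓ then 1 else 0

def zeroExtend {n : ℕ} (x : EuclideanSpace ℂ (Fin n)) (k : ℕ) : ℂ :=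
  if h : k < n then x ⟨k, h⟩ else 0

section UpperOnes

variable {n : ℕ} (x : EuclideanSpace ℂ (Fin n))

lemma zeroExtend_val (i : Fin n) : zeroExtend x i = x i := dif_pos i.isLt

lemma zeroExtend_of_le {k : ℕ} (hk : n ≤ k) : zeroExtend x k = 0 := dif_neg (by omega)

lemma norm_sq_eq_sum_range : ‖x‖ ^ 2 = ∑ k ∈ range n, ‖zeroExtend x k‖ ^ 2 := by
  rw [EuclideanSpace.norm_sq_eq, ← Fin.sum_univ_eq_sum_range]
  simp only [zeroExtend_val]

lemma zeroExtend_upperOnes (k : ℕ) :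
    zeroExtend (Matrix.toEuclideanCLM (𝕜 := ℂ) (upperOnes n) x) k
      = ∑ j ∈ Ico k n, zeroExtend x j := by
  by_cases hk : k < n
  · have hIco : Ico k n = (range n).filter (k ≤ ·) := by ext; simp; omega
    rw [zeroExtend, dif_pos hk, Matrix.ofLp_toEuclideanCLM, hIco, sum_filter,
      ← Fin.sum_univ_eq_sum_range (fun j => if k ≤ j then zeroExtend x j else 0)]
    simp only [Matrix.mulVec, dotProduct]
    refine sum_congr rfl fun j _ => ?_
    rw [zeroExtend_val, upperOnes, Matrix.of_apply]
    simp only [Fin.le_def, ite_mul, one_mul, zero_mul]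
  · rw [zeroExtend_of_le _ (not_lt.mp hk), Ico_eq_empty (by omega), sum_empty]

local notation "T" => Matrix.toEuclideanCLM (𝕜 := ℂ) (upperOnes n)

lemma zeroExtend_upperOnes_sub {k : ℕ} (hk : k < n) :
    zeroExtend (T x) k - zeroExtend (T x) (k + 1) = zeroExtend x k := by
  rw [zeroExtend_upperOnes, zeroExtend_upperOnes, sum_eq_sum_Ico_succ_bot hk,
    add_sub_cancel_right]

variable {u : ℕ → ℝ} {c : ℝ}

lemma sqrt_mul_norm_upperOnes_le (hrec : ∀ k, u (k + 2) + u k = c * u (k + 1))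
    (h0 : u 1 + u 0 = c * u 0) (hpos : ∀ k < n, 0 < u k) (hu : u n = 0) :
    √(2 - c) * ‖T x‖ ≤ ‖x‖ := by
  have hsq : (2 - c) * ‖T x‖ ^ 2 ≤ ‖x‖ ^ 2 := by
    rw [norm_sq_eq_sum_range (T x), norm_sq_eq_sum_range x]
    calc _ ≤ ∑ k ∈ range n, ‖zeroExtend (T x) k - zeroExtend (T x) (k + 1)‖ ^ 2 :=
          mul_sum_norm_sq_le_sum_norm_sub_sq hrec h0 hpos hu _ (zeroExtend_of_le _ le_rfl)
      _ = _ := sum_congr rfl fun k hk => by rw [zeroExtend_upperOnes_sub x (mem_range.mp hk)]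
  rw [← sqrt_sq (norm_nonneg x), ← sqrt_sq (norm_nonneg (T x)), ← sqrt_mul' _ (sq_nonneg _)]
  exact sqrt_le_sqrt hsq

lemma exists_norm_eq_sqrt_mul_norm_upperOnes (hrec : ∀ k, u (k + 2) + u k = c * u (k + 1))
    (h0 : u 1 + u 0 = c * u 0) (hn : 0 < n) (hpos : ∀ k < n, 0 < u k) (hu : u n = 0) :
    ∃ x, T x ≠ 0 ∧ ‖x‖ = √(2 - c) * ‖T x‖ := by
  set x : EuclideanSpace ℂ (Fin n) := WithLp.toLp 2 fun i => ((u i - u (i + 1) : ℝ) : ℂ)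
  set y := T x
  have hx : ∀ k < n, zeroExtend x k = ((u k - u (k + 1) : ℝ) : ℂ) := fun k hk => dif_pos hk
  have hy : ∀ k < n, zeroExtend y k = u k := by
    intro k hk
    have htel := sum_Ico_sub (fun j => -(u j : ℂ)) hk.le
    simp only [neg_sub_neg] at htel
    rw [zeroExtend_upperOnes, sum_congr rfl fun j hj => hx j (mem_Ico.mp hj).2]
    push_cast
    rw [htel, hu, Complex.ofReal_zero, sub_zero]
  have hy_sq : ‖y‖ ^ 2 = ∑ k ∈ range n, u k ^ 2 := by
    rw [norm_sq_eq_sum_range]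
    refine sum_congr rfl fun k hk => ?_
    rw [hy k (mem_range.mp hk), Complex.norm_real, norm_eq_abs, sq_abs]
  have hx_sq : ‖x‖ ^ 2 = (2 - c) * ‖y‖ ^ 2 := by
    rw [hy_sq, ← sum_sub_sq_eq hrec h0 hu, norm_sq_eq_sum_range]
    refine sum_congr rfl fun k hk => ?_
    rw [hx k (mem_range.mp hk), Complex.norm_real, norm_eq_abs, sq_abs]
  have hy0 : y ≠ 0 := by
    intro hy0
    have h : u 0 ^ 2 ≤ ‖y‖ ^ 2 :=
      hy_sq ▸ single_le_sum (fun k _ => sq_nonneg (u k)) (mem_range.mpr hn)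
    rw [hy0, norm_zero] at h
    nlinarith [hpos 0 hn]
  refine ⟨x, hy0, ?_⟩
  rw [← sqrt_sq (norm_nonneg x), hx_sq, sqrt_mul' _ (sq_nonneg _), sqrt_sq (norm_nonneg y)]

theorem opNorm_upperOnes_eq (hrec : ∀ k, u (k + 2) + u k = c * u (k + 1))
    (h0 : u 1 + u 0 = c * u 0) (hn : 0 < n) (hpos : ∀ k < n, 0 < u k) (hu : u n = 0)
    (hc : c < 2) :
    ‖T‖ = (√(2 - c))⁻¹ :=
  (T).opNorm_eq_inv_of_bounds (sqrt_pos.mpr (by linarith))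
    (sqrt_mul_norm_upperOnes_le · hrec h0 hpos hu)
    (exists_norm_eq_sqrt_mul_norm_upperOnes hrec h0 hn hpos hu)

end UpperOnes

theorem stmt6 {n : ℕ} (hn : 0 < n)
    (Q : Matrix (Fin n) (Fin n) ℂ)
    (hQ : Q = Matrix.of fun k ℓ : Fin n => if k ≤ ℓ then (1 : ℂ) else 0) :
    opN Q = 1 / (2 * Real.sin (π / (4 * n + 2))) := by
  set θ := π / (4 * (n : ℝ) + 2)
  have hθ : θ < π := div_lt_self pi_pos (by linarith [n.cast_nonneg (α := ℝ)])
  have hsin : 0 < sin θ := sin_pos_of_pos_of_lt_pi (by positivity) hθ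
  have hc : 2 - 2 * cos (2 * θ) = (2 * sin θ) ^ 2 := by rw [cos_two_mul, cos_sq']; ring
  rw [opN, hQ, one_div, ← sqrt_sq (by positivity : 0 ≤ 2 * sin θ), ← hc]
  exact opNorm_upperOnes_eq (cosSeq_add_two θ) (cosSeq_one_add_zero θ) hn
    (fun _ hk => cosSeq_pos hk) (cosSeq_self n) (by nlinarith)
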